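/- arXiv:1804.01569 — 6 statements merged into one kernel-verified Lean document; each statement's English description precedes it below -/
import Mathlib

section
/- Let f in F_q[x,y,z] be a nonzero homogeneous polynomial of degree d with 1 ≤ d ≤ q. Then the plane curve defined by f does not pass through all F_q-rational points of the projective plane; that is, there exists a point P in P^2(F_q) with f(P) ≠ 0. -/
open MvPolynomial

noncomputable section

/-- The projective plane over a field `K`, as the projectivization of `K^3`. -/
abbrev ProjPlane (K : Type*) [Field K] := Projectivization K (Fin 3 → K)

variable {F : Type*} [Field F]

/-- A geometric point (over the algebraic closure) lies on the plane curve defined by `f`. -/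
def OnCurve (f : MvPolynomial (Fin 3) F) (P : ProjPlane (AlgebraicClosure F)) : Prop :=
  aeval P.rep f = 0

/-- A geometric point lies on the `F`-rational line with coefficient vector `a`. -/
def OnLine (a : Fin 3 → F) (P : ProjPlane (AlgebraicClosure F)) : Prop :=
  ∑ i, algebraMap F (AlgebraicClosure F) (a i) * P.rep i = 0

/-- The plane curve defined by `f` is smooth: the gradient of `f` is nonzero at every
geometric point of the curve. -/
def SmoothCurve (f : MvPolynomial (Fin 3) F) : Prop :=
  ∀ P : ProjPlane (AlgebraicClosure F), OnCurve f P → ∃ i, aeval P.rep (pderiv i f) ≠ 0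

/-- The `F`-line with coefficients `a` meets the curve defined by `f` transversely:
the intersection consists of exactly `d` distinct geometric points. -/
def Transverse (f : MvPolynomial (Fin 3) F) (a : Fin 3 → F) (d : ℕ) : Prop :=
  {P : ProjPlane (AlgebraicClosure F) | OnCurve f P ∧ OnLine a P}.ncard = d

/-- The restriction of `f` to the line `t ↦ v + t • w`, as a univariate polynomial. -/
def LinePoly (f : MvPolynomial (Fin 3) F) (v w : Fin 3 → AlgebraicClosure F) :
    Polynomial (AlgebraicClosure F) :=
  aeval (fun i => Polynomial.C (v i) + Polynomial.X * Polynomial.C (w i)) f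

/-- `P` is a flex point of the curve defined by `f`: the tangent line at `P` meets the
curve at `P` with intersection multiplicity at least 3. The tangent line is parametrized
through `P.rep` and a direction `w` lying on the tangent line, independent from `P.rep`. -/
def IsFlex (f : MvPolynomial (Fin 3) F) (P : ProjPlane (AlgebraicClosure F)) : Prop :=
  OnCurve f P ∧ ∃ w : Fin 3 → AlgebraicClosure F,
    (¬ ∃ c : AlgebraicClosure F, w = c • P.rep) ∧
    (∑ i, aeval P.rep (pderiv i f) * w i = 0) ∧
    (Polynomial.X : Polynomial (AlgebraicClosure F)) ^ 3 ∣ LinePoly f P.rep w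

/-- The `F`-line with coefficients `a` is the tangent line to the curve `f` at the
geometric point `P`, i.e. `a` is proportional to the gradient of `f` at `P`. -/
def IsTangentAt (f : MvPolynomial (Fin 3) F) (a : Fin 3 → F)
    (P : ProjPlane (AlgebraicClosure F)) : Prop :=
  OnCurve f P ∧ ∃ c : AlgebraicClosure F, c ≠ 0 ∧
    ∀ i, algebraMap F (AlgebraicClosure F) (a i) = c * aeval P.rep (pderiv i f)

/-- The `q`-power Frobenius map on the projective plane. -/
def FrobPt {K : Type*} [Field K] (q : ℕ) (P : ProjPlane K) : ProjPlane K :=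
  Projectivization.mk K (fun i => P.rep i ^ q) (by
    intro hc
    rcases Nat.eq_zero_or_pos q with h0 | h0
    · have := congrFun hc 0
      simp [h0] at this
    · apply P.rep_nonzero
      funext i
      have := congrFun hc i
      simp only [Pi.zero_apply] at this ⊢
      exact pow_eq_zero_iff h0.ne' |>.mp this)

/-- A geometric point of the projective plane is `F`-rational. -/
def IsRationalPt (P : ProjPlane (AlgebraicClosure F)) : Prop :=
  ∃ v : Fin 3 → F, v ≠ 0 ∧ ∃ c : AlgebraicClosure F, c ≠ 0 ∧
    ∀ i, P.rep i = c * algebraMap F (AlgebraicClosure F) (v i)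

/-- The curve defined by `f` is Frobenius non-classical over `F` (with `q = #F`):
the image of every geometric point of the curve under the `q`-power Frobenius lies on
the tangent line at that point. -/
def FrobeniusNonClassical (f : MvPolynomial (Fin 3) F) (q : ℕ) : Prop :=
  ∀ P : ProjPlane (AlgebraicClosure F), OnCurve f P →
    ∑ i, aeval P.rep (pderiv i f) * P.rep i ^ q = 0


/-- Evaluating a homogeneous polynomial at a scalar multiple scales by `c ^ n`. -/
private lemma eval_smul_homog {R : Type*} [CommRing R] {σ : Type*} {f : MvPolynomial σ R} {n : ℕ}
    (hf : f.IsHomogeneous n) (c : R) (v : σ → R) :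
    eval (c • v) f = c ^ n * eval v f := by
  classical
  rw [eval_eq, eval_eq, Finset.mul_sum]
  apply Finset.sum_congr rfl
  intro d hd
  have hdeg : d.degree = n := by
    by_contra hne
    exact (mem_support_iff.mp hd) (hf.coeff_eq_zero hne)
  have : ∏ i ∈ d.support, (c • v) i ^ d i = c ^ n * ∏ i ∈ d.support, v i ^ d i := by
    simp only [Pi.smul_apply, smul_eq_mul, mul_pow]
    rw [Finset.prod_mul_distrib, Finset.prod_pow_eq_pow_sum]
    rw [← hdeg]; rfl
  rw [this]; ring

/-- A plane curve of degree `1 ≤ d ≤ q` over `F_q` cannot pass through all the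
`F_q`-rational points of the projective plane. -/
theorem curve_not_space_filling
    (q d : ℕ) (F : Type*) [Field F] [Fintype F] (hcard : Fintype.card F = q)
    (f : MvPolynomial (Fin 3) F) (hf0 : f ≠ 0) (hfd : f.IsHomogeneous d)
    (hd1 : 1 ≤ d) (hdq : d ≤ q) :
    ∃ P : Projectivization F (Fin 3 → F), eval P.rep f ≠ 0 := by
  by_contra h
  push_neg at h
  apply hf0
  apply hfd.eq_zero_of_forall_eval_eq_zero_of_le_card
  · intro v
    by_cases hv : v = 0
    · subst hv
      rw [eval_zero]
      exact hfd.coeff_eq_zero (by simp [Finsupp.degree]; omega)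
    · have hmk := Projectivization.mk_rep (Projectivization.mk F v hv)
      rw [Projectivization.mk_eq_mk_iff] at hmk
      obtain ⟨a, ha⟩ := hmk
      have h0 := h (Projectivization.mk F v hv)
      rw [← ha, Units.smul_def, eval_smul_homog hfd] at h0
      rcases mul_eq_zero.mp h0 with h1 | h1
      · exact absurd h1 (pow_ne_zero _ a.ne_zero)
      · exact h1
  · rw [Cardinal.mk_fintype, hcard]
    exact_mod_cast hdq

end
end

section
/- Let C be a smooth plane curve of degree q + 2 over F_q such that C passes through every F_q-rational point of the projective plane, i.e., #C(F_q) = q^2 + q + 1. Then every F_q-line L is tangent to C at one of its F_q-rational points; that is, for every F_q-line L there exists an F_q-rational point P of C on L such that L meets C at P with intersection multiplicity at least 2. -/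
open MvPolynomial

noncomputable section

variable {F : Type*} [Field F]

/-- The univariate polynomial obtained by restricting `f` to the parametrized
`F`-rational line `t ↦ v + t • w`. -/
def LinePolyF (f : MvPolynomial (Fin 3) F) (v w : Fin 3 → F) : Polynomial F :=
  aeval (fun i => Polynomial.C (v i) + Polynomial.X * Polynomial.C (w i)) f

/-- The set of `F`-rational points of the plane curve defined by `f`. -/
def RatPoints (f : MvPolynomial (Fin 3) F) : Set (Projectivization F (Fin 3 → F)) :=
  {P : Projectivization F (Fin 3 → F) | eval P.rep f = 0}

/-! Since `C` passes through all `q² + q + 1` points of `ℙ²(𝔽_q)`, the restriction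
`g(t) = f(v + t • w)` of `f` to an `𝔽_q`-line vanishes on all of `𝔽_q` and also at
`t = ∞` (the point `w`), so `g = (t ^ q - t) * k` with `deg k ≤ 1`. If `k` is not a
nonzero constant it has a root `t₀ ∈ 𝔽_q`, a double root of `g`: the line is tangent at
`v + t₀ • w`. Otherwise `deg g ≤ q`, so `t = ∞` is a double root: the line is tangent
at `w`. Reflecting `g` (degree `q + 2`) gives the restriction `f(w + t • v)`, which
turns the point at infinity into `t = 0`. -/

namespace Polynomial

section Reflect

variable {R : Type*} [CommSemiring R]

theorem reflect_sum {ι : Type*} (s : Finset ι) (p : ι → R[X]) (N : ℕ) :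
    (∑ i ∈ s, p i).reflect N = ∑ i ∈ s, (p i).reflect N := by
  classical
  induction s using Finset.induction with
  | empty => simp
  | insert x s hx ih => rw [Finset.sum_insert hx, Finset.sum_insert hx, reflect_add, ih]

theorem reflect_prod {ι : Type*} (s : Finset ι) (p : ι → R[X]) (n : ι → ℕ)
    (h : ∀ i ∈ s, (p i).natDegree ≤ n i) :
    (∏ i ∈ s, p i).reflect (∑ i ∈ s, n i) = ∏ i ∈ s, (p i).reflect (n i) := by
  classical
  induction s using Finset.induction with
  | empty => simp [reflect_one]
  | insert x s hx ih =>
    rw [Finset.forall_mem_insert] at h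
    rw [Finset.prod_insert hx, Finset.prod_insert hx, Finset.sum_insert hx,
      reflect_mul _ _ h.1 ((natDegree_prod_le _ _).trans (Finset.sum_le_sum h.2)), ih h.2]

theorem reflect_pow {p : R[X]} {n : ℕ} (h : p.natDegree ≤ n) (m : ℕ) :
    (p ^ m).reflect (m * n) = p.reflect n ^ m := by
  simpa using reflect_prod (Finset.range m) (fun _ => p) (fun _ => n) (fun _ _ => h)

theorem natDegree_C_add_X_mul_C_le (a b : R) : (C a + X * C b).natDegree ≤ 1 := by
  rw [add_comm, X_mul_C]
  exact natDegree_linear_le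

theorem reflect_C_add_X_mul_C (a b : R) : (C a + X * C b).reflect 1 = C b + X * C a := by
  ext n
  rcases n with _ | _ | n <;> simp [coeff_C]

end Reflect

section FiniteField

open FiniteField

variable {K : Type*} [Field K] [Fintype K]

theorem X_pow_card_sub_X_dvd_of_forall_eval_eq_zero {g : K[X]} (hg : ∀ c, g.eval c = 0) :
    X ^ Fintype.card K - X ∣ g := by
  rcases eq_or_ne g 0 with rfl | hg0
  · exact dvd_zero _
  have hq : 1 < Fintype.card K := Fintype.one_lt_card
  refine Splits.dvd_of_roots_le_roots ?_ (X_pow_card_sub_X_ne_zero K hq) ?_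
  · rw [splits_iff_card_roots, roots_X_pow_card_sub_X, X_pow_card_sub_X_natDegree_eq K hq]
    rfl
  · rw [roots_X_pow_card_sub_X, Multiset.le_iff_subset Finset.univ.nodup]
    exact fun c _ => (mem_roots hg0).2 (hg c)

theorem exists_sq_X_sub_C_dvd_or_coeff_eq_zero {g : K[X]}
    (hdeg : g.natDegree ≤ Fintype.card K + 1) (hg : ∀ c, g.eval c = 0) :
    (∃ t, (X - C t) ^ 2 ∣ g) ∨ g.coeff (Fintype.card K + 1) = 0 := by
  refine or_iff_not_imp_right.2 fun htop => ?_
  have hq : 1 < Fintype.card K := Fintype.one_lt_card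
  obtain ⟨k, rfl⟩ := X_pow_card_sub_X_dvd_of_forall_eval_eq_zero hg
  have hk0 : k ≠ 0 := by rintro rfl; simp at htop
  have hk : k.degree = 1 := by
    have := natDegree_eq_of_le_of_coeff_ne_zero hdeg htop
    rw [natDegree_mul (X_pow_card_sub_X_ne_zero K hq) hk0, X_pow_card_sub_X_natDegree_eq K hq]
      at this
    rw [degree_eq_natDegree hk0]
    exact_mod_cast (by omega : k.natDegree = 1)
  obtain ⟨t, ht⟩ := exists_root_of_degree_eq_one hk
  refine ⟨t, ?_⟩
  rw [sq]
  refine mul_dvd_mul ?_ (dvd_iff_isRoot.2 ht)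
  rw [dvd_iff_isRoot]
  simp [IsRoot, pow_card]

end FiniteField

end Polynomial

namespace MvPolynomial.IsHomogeneous

variable {σ R : Type*} [CommSemiring R] {φ : MvPolynomial σ R} {n : ℕ}

theorem aeval_smul {A : Type*} [CommSemiring A] [Algebra R A] (hφ : φ.IsHomogeneous n)
    (c : A) (x : σ → A) : MvPolynomial.aeval (c • x) φ = c ^ n * MvPolynomial.aeval x φ := by
  simp only [aeval_def, eval₂_eq, Finset.mul_sum]
  refine Finset.sum_congr rfl fun s hs => ?_
  simp only [Pi.smul_apply, smul_eq_mul, mul_pow, Finset.prod_mul_distrib,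
    Finset.prod_pow_eq_pow_sum, ← hφ.degree_eq_sum_deg_support hs]
  ring

theorem eval_smul (hφ : φ.IsHomogeneous n) (c : R) (x : σ → R) :
    eval (c • x) φ = c ^ n * eval x φ := by
  simpa only [aeval_eq_eval] using hφ.aeval_smul c x

theorem natDegree_aeval_le (hφ : φ.IsHomogeneous n) {x : σ → Polynomial R}
    (hx : ∀ i, (x i).natDegree ≤ 1) : (MvPolynomial.aeval x φ).natDegree ≤ n := by
  rw [aeval_def, eval₂_eq]
  refine Polynomial.natDegree_sum_le_of_forall_le _ _ fun s hs => ?_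
  refine (Polynomial.natDegree_C_mul_le _ _).trans ?_
  rw [hφ.degree_eq_sum_deg_support hs]
  refine (Polynomial.natDegree_prod_le _ _).trans (Finset.sum_le_sum fun i _ => ?_)
  simpa using Polynomial.natDegree_pow_le_of_le (s i) (hx i)

theorem reflect_aeval (hφ : φ.IsHomogeneous n) {x : σ → Polynomial R}
    (hx : ∀ i, (x i).natDegree ≤ 1) :
    (MvPolynomial.aeval x φ).reflect n = MvPolynomial.aeval (fun i => (x i).reflect 1) φ := by
  simp only [aeval_def, eval₂_eq, Polynomial.reflect_sum]
  refine Finset.sum_congr rfl fun s hs => ?_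
  have hpow (i : σ) : (x i ^ s i).natDegree ≤ s i := by
    simpa using Polynomial.natDegree_pow_le_of_le (s i) (hx i)
  rw [Polynomial.algebraMap_eq, Polynomial.reflect_C_mul, hφ.degree_eq_sum_deg_support hs,
    Polynomial.reflect_prod _ _ _ fun i _ => hpow i]
  refine congrArg _ (Finset.prod_congr rfl fun i _ => ?_)
  simpa using Polynomial.reflect_pow (hx i) (s i)

end MvPolynomial.IsHomogeneous

theorem exists_linearIndependent_pair_dotProduct_eq_zero {K ι : Type*} [Field K] [Fintype ι]
    (hι : 3 ≤ Fintype.card ι) (a : ι → K) :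
    ∃ v w : ι → K, LinearIndependent K ![v, w] ∧ a ⬝ᵥ v = 0 ∧ a ⬝ᵥ w = 0 := by
  let ℓ : (ι → K) →ₗ[K] K := dotProductBilin K K a
  have hker : 2 ≤ Module.finrank K (LinearMap.ker ℓ) := by
    have hsum := LinearMap.finrank_range_add_finrank_ker ℓ
    have hrange := Submodule.finrank_le (LinearMap.range ℓ)
    rw [Module.finrank_fintype_fun_eq_card] at hsum
    rw [Module.finrank_self] at hrange
    omega
  obtain ⟨b, hb⟩ := exists_linearIndependent_of_le_finrank hker
  refine ⟨b 0, b 1, ?_, LinearMap.mem_ker.1 (b 0).2, LinearMap.mem_ker.1 (b 1).2⟩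
  have hvec : ![(b 0 : ι → K), b 1] = (LinearMap.ker ℓ).subtype ∘ b := by
    ext i
    fin_cases i <;> rfl
  rw [hvec]
  exact hb.map' _ (LinearMap.ker ℓ).ker_subtype

section LinePolyF

theorem eval_linePolyF (f : MvPolynomial (Fin 3) F) (v w : Fin 3 → F) (t : F) :
    (LinePolyF f v w).eval t = eval (v + t • w) f := by
  rw [LinePolyF, ← Polynomial.coe_aeval_eq_eval, comp_aeval_apply, ← aeval_eq_eval]
  congr 2
  funext i
  simp [mul_comm t]

theorem coeff_zero_linePolyF (f : MvPolynomial (Fin 3) F) (v w : Fin 3 → F) :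
    (LinePolyF f v w).coeff 0 = eval v f := by
  rw [Polynomial.coeff_zero_eq_eval_zero, eval_linePolyF, zero_smul, add_zero]

theorem linePolyF_comp_X_add_C (f : MvPolynomial (Fin 3) F) (v w : Fin 3 → F) (t : F) :
    (LinePolyF f v w).comp (Polynomial.X + Polynomial.C t) = LinePolyF f (v + t • w) w := by
  rw [LinePolyF, Polynomial.comp_eq_aeval, comp_aeval_apply, LinePolyF]
  congr 2
  funext i
  simp only [map_add, map_mul, Polynomial.aeval_C, Polynomial.aeval_X, Polynomial.algebraMap_eq,
    Pi.add_apply, Pi.smul_apply, smul_eq_mul]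
  ring

variable {f : MvPolynomial (Fin 3) F} {d : ℕ}

theorem MvPolynomial.IsHomogeneous.linePolyF_smul (hf : f.IsHomogeneous d) (c : F)
    (v w : Fin 3 → F) :
    LinePolyF f (c • v) (c • w) = Polynomial.C (c ^ d) * LinePolyF f v w := by
  rw [LinePolyF, LinePolyF, Polynomial.C_pow, ← hf.aeval_smul]
  congr 2
  funext i
  simp only [Pi.smul_apply, smul_eq_mul, Polynomial.C_mul]
  ring

theorem MvPolynomial.IsHomogeneous.natDegree_linePolyF_le (hf : f.IsHomogeneous d)
    (v w : Fin 3 → F) : (LinePolyF f v w).natDegree ≤ d :=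
  hf.natDegree_aeval_le fun _ => Polynomial.natDegree_C_add_X_mul_C_le _ _

theorem MvPolynomial.IsHomogeneous.reflect_linePolyF (hf : f.IsHomogeneous d)
    (v w : Fin 3 → F) : (LinePolyF f v w).reflect d = LinePolyF f w v := by
  simp only [LinePolyF, hf.reflect_aeval fun _ => Polynomial.natDegree_C_add_X_mul_C_le _ _,
    Polynomial.reflect_C_add_X_mul_C]

theorem MvPolynomial.IsHomogeneous.coeff_linePolyF_swap (hf : f.IsHomogeneous d)
    (v w : Fin 3 → F) {n : ℕ} (hn : n ≤ d) :
    (LinePolyF f w v).coeff n = (LinePolyF f v w).coeff (d - n) := by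
  rw [← hf.reflect_linePolyF v w, Polynomial.coeff_reflect, Polynomial.revAt_le hn]

theorem MvPolynomial.IsHomogeneous.eval_eq_zero_of_ratPoints_eq_univ (hf : f.IsHomogeneous d)
    (hfill : RatPoints f = Set.univ) {u : Fin 3 → F} (hu : u ≠ 0) : eval u f = 0 := by
  obtain ⟨γ, hγ⟩ := Projectivization.exists_smul_eq_mk_rep F u hu
  have hP : eval (Projectivization.mk F u hu).rep f = 0 :=
    (hfill ▸ Set.mem_univ _ : Projectivization.mk F u hu ∈ RatPoints f)
  rw [← hγ, Units.smul_def, hf.eval_smul] at hP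
  exact (mul_eq_zero.1 hP).resolve_left (pow_ne_zero _ γ.ne_zero)

theorem MvPolynomial.IsHomogeneous.exists_point_tangent_of_sq_dvd_linePolyF
    (hf : f.IsHomogeneous d) {a u z : Fin 3 → F} (huz : LinearIndependent F ![u, z])
    (hu : eval u f = 0) (hau : a ⬝ᵥ u = 0) (haz : a ⬝ᵥ z = 0)
    (hdvd : Polynomial.X ^ 2 ∣ LinePolyF f u z) :
    ∃ P : Projectivization F (Fin 3 → F), eval P.rep f = 0 ∧ (∑ i, a i * P.rep i = 0) ∧
      ∃ w : Fin 3 → F, (¬ ∃ c : F, w = c • P.rep) ∧ (∑ i, a i * w i = 0) ∧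
        (Polynomial.X : Polynomial F) ^ 2 ∣ LinePolyF f P.rep w := by
  have hu0 : u ≠ 0 := by simpa using huz.ne_zero 0
  obtain ⟨γ, hγ⟩ := Projectivization.exists_smul_eq_mk_rep F u hu0
  have hrep : (Projectivization.mk F u hu0).rep = (γ : F) • u := by rw [← hγ, Units.smul_def]
  have hγuz : LinearIndependent F ![(γ : F) • u, (γ : F) • z] :=
    (LinearIndependent.pair_smul_iff γ.ne_zero).2 huz
  refine ⟨Projectivization.mk F u hu0, ?_, ?_, (γ : F) • z, ?_, ?_, ?_⟩
  · rw [hrep, hf.eval_smul, hu, mul_zero]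
  · rw [hrep]
    exact (dotProduct_smul _ a u).trans (by rw [hau, smul_zero])
  · rintro ⟨c, hc⟩
    rw [hrep] at hc
    exact (LinearIndependent.pair_iff' (by simpa using hγuz.ne_zero 0)).1 hγuz c hc.symm
  · exact (dotProduct_smul _ a z).trans (by rw [haz, smul_zero])
  · rw [hrep, hf.linePolyF_smul]
    exact dvd_mul_of_dvd_right hdvd _

variable [Fintype F]

theorem ratPoints_eq_univ_of_ncard_eq
    (hfill : (RatPoints f).ncard = Fintype.card F ^ 2 + Fintype.card F + 1) :
    RatPoints f = Set.univ := by
  refine Set.eq_of_subset_of_ncard_le (Set.subset_univ _) ?_ Set.finite_univ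
  rw [Set.ncard_univ, hfill,
    Projectivization.card_of_finrank F (Fin 3 → F) (Module.finrank_fin_fun F)]
  simp only [Nat.card_eq_fintype_card, Finset.sum_range_succ, Finset.range_one,
    Finset.sum_singleton, pow_zero, pow_one]
  omega

theorem MvPolynomial.IsHomogeneous.sq_dvd_linePolyF_of_forall_eval_eq_zero
    (hf : f.IsHomogeneous (Fintype.card F + 2)) (hvanish : ∀ u ≠ 0, eval u f = 0)
    {v w : Fin 3 → F} (hvw : LinearIndependent F ![v, w]) :
    (∃ t : F, Polynomial.X ^ 2 ∣ LinePolyF f (v + t • w) w) ∨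
      Polynomial.X ^ 2 ∣ LinePolyF f w v := by
  have hroots (t : F) : (LinePolyF f v w).eval t = 0 := by
    have hvtw := (LinearIndependent.pair_add_smul_left_iff t).2 hvw
    rw [eval_linePolyF]
    exact hvanish _ (by simpa using hvtw.ne_zero 0)
  have hw : eval w f = 0 := hvanish w (by simpa using hvw.ne_zero 1)
  have hdeg : (LinePolyF f v w).natDegree ≤ Fintype.card F + 1 := by
    refine Polynomial.natDegree_le_pred (hf.natDegree_linePolyF_le v w) ?_
    rw [← Nat.sub_zero (_ + 2), ← hf.coeff_linePolyF_swap v w (Nat.zero_le _),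
      coeff_zero_linePolyF, hw]
  rcases Polynomial.exists_sq_X_sub_C_dvd_or_coeff_eq_zero hdeg hroots with ⟨t, e, he⟩ | hcoeff
  · refine .inl ⟨t, ?_⟩
    rw [← linePolyF_comp_X_add_C, he, Polynomial.mul_comp, Polynomial.pow_comp,
      Polynomial.sub_comp, Polynomial.X_comp, Polynomial.C_comp, add_sub_cancel_right]
    exact dvd_mul_right _ _
  · refine .inr (Polynomial.X_pow_dvd_iff.2 fun n hn => ?_)
    interval_cases n
    · rw [coeff_zero_linePolyF, hw]
    · rw [hf.coeff_linePolyF_swap v w (by omega)]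
      exact hcoeff

end LinePolyF

theorem space_filling_curve_all_lines_tangent_general
    (q : ℕ)
    (F : Type*) [Field F] [Fintype F] (hcard : Fintype.card F = q)
    (f : MvPolynomial (Fin 3) F) (hfd : f.IsHomogeneous (q + 2))
    (hfill : (RatPoints f).ncard = q ^ 2 + q + 1) :
    ∀ a : Fin 3 → F, a ≠ 0 →
      ∃ P : Projectivization F (Fin 3 → F), eval P.rep f = 0 ∧ (∑ i, a i * P.rep i = 0) ∧
        ∃ w : Fin 3 → F, (¬ ∃ c : F, w = c • P.rep) ∧ (∑ i, a i * w i = 0) ∧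
          (Polynomial.X : Polynomial F) ^ 2 ∣ LinePolyF f P.rep w := by
  subst hcard
  intro a _
  have hvanish : ∀ u ≠ 0, eval u f = 0 := fun u =>
    hfd.eval_eq_zero_of_ratPoints_eq_univ (ratPoints_eq_univ_of_ncard_eq hfill)
  obtain ⟨v, w, hvw, hav, haw⟩ := exists_linearIndependent_pair_dotProduct_eq_zero le_rfl a
  rcases hfd.sq_dvd_linePolyF_of_forall_eval_eq_zero hvanish hvw with ⟨t, hdvd⟩ | hdvd
  · have hvtw : LinearIndependent F ![v + t • w, w] :=
      (LinearIndependent.pair_add_smul_left_iff t).2 hvw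
    refine hfd.exists_point_tangent_of_sq_dvd_linePolyF hvtw
      (hvanish _ (by simpa using hvtw.ne_zero 0)) ?_ haw hdvd
    rw [dotProduct_add, dotProduct_smul, hav, haw, smul_zero, add_zero]
  · exact hfd.exists_point_tangent_of_sq_dvd_linePolyF (LinearIndependent.pair_symm_iff.1 hvw)
      (hvanish w (by simpa using hvw.ne_zero 1)) haw hav hdvd

/-- **Example 2.A.** If `C` is a smooth space-filling plane curve of degree `q + 2` over
`F_q` (i.e. `#C(F_q) = q² + q + 1`), then every `F_q`-line is tangent to `C` at one of its
`F_q`-rational points: it meets `C` there with intersection multiplicity at least `2`. -/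
theorem space_filling_curve_all_lines_tangent
    (p q : ℕ) [Fact p.Prime] (hp : 2 < p)
    (F : Type*) [Field F] [Fintype F] [CharP F p] (hcard : Fintype.card F = q)
    (f : MvPolynomial (Fin 3) F) (hf0 : f ≠ 0) (hfd : f.IsHomogeneous (q + 2))
    (hsmooth : SmoothCurve f)
    (hfill : (RatPoints f).ncard = q ^ 2 + q + 1) :
    ∀ a : Fin 3 → F, a ≠ 0 →
      ∃ P : Projectivization F (Fin 3 → F), eval P.rep f = 0 ∧ (∑ i, a i * P.rep i = 0) ∧
        ∃ w : Fin 3 → F, (¬ ∃ c : F, w = c • P.rep) ∧ (∑ i, a i * w i = 0) ∧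
          (Polynomial.X : Polynomial F) ^ 2 ∣ LinePolyF f P.rep w :=
  space_filling_curve_all_lines_tangent_general q F hcard f hfd hfill
end
end

section
/- Let C be a smooth plane curve over F_q of characteristic p > 2, and suppose the set {P ∈ C over the algebraic closure : Φ(P) ∈ T_P(C)} is finite, of cardinality N. If every F_q-line is tangent to C at some point over the algebraic closure, then q^2 + q + 1 ≤ #C(F_q) + N/2, i.e., 2(q^2 + q + 1) ≤ 2·#C(F_q) + N. -/
/-!
For each `F_q`-line `L` choose a point `P_L` at which `L` is tangent. By Euler's identity `P_L`
lies on `L`, hence so does `Φ(P_L)` since `L` is rational. So `P_L` lies in the set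
`{P ∈ C : Φ(P) ∈ T_P(C)}` of size `N`, and so does `Φ(P_L)`, which is again a point of tangency
of `L`. A point is a point of tangency of at most one line. Hence the lines with `Φ(P_L) = P_L`
give distinct rational points of `C`, while every other line gives two points `P_L ≠ Φ(P_L)` of
that set, shared with no other line. Counting the `q² + q + 1` lines gives the inequality.
-/

open MvPolynomial

noncomputable section

variable {F : Type*} [Field F]

open scoped LinearAlgebra.Projectivization

namespace MvPolynomial

variable {R S σ : Type*} [CommSemiring R] [CommSemiring S] [Algebra R S]

theorem IsHomogeneous.aeval_smul_s7 {f : MvPolynomial σ R} {n : ℕ} (hf : f.IsHomogeneous n)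
    (c : S) (x : σ → S) : MvPolynomial.aeval (c • x) f = c ^ n * MvPolynomial.aeval x f := by
  rw [f.as_sum, map_sum, map_sum, Finset.mul_sum]
  refine Finset.sum_congr rfl fun s hs => ?_
  have hdeg : ∑ i ∈ s.support, s i = n := by
    simpa [Finsupp.weight_apply, Finsupp.sum] using hf (mem_support_iff.mp hs)
  simp only [aeval_monomial, Pi.smul_apply, smul_eq_mul, mul_pow, Finsupp.prod,
    Finset.prod_mul_distrib, Finset.prod_pow_eq_pow_sum, hdeg]
  ring

theorem IsHomogeneous.sum_aeval_pderiv_mul [Fintype σ] {f : MvPolynomial σ R} {n : ℕ}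
    (hf : f.IsHomogeneous n) (x : σ → S) :
    ∑ i, MvPolynomial.aeval x (pderiv i f) * x i = n * MvPolynomial.aeval x f := by
  simpa [mul_comm] using congrArg (MvPolynomial.aeval x) hf.sum_X_mul_pderiv

theorem aeval_pow_card {K T : Type*} [Field K] [Fintype K] [CommRing T] [Algebra K T]
    (f : MvPolynomial σ K) (x : σ → T) :
    aeval (fun i => x i ^ Fintype.card K) f = aeval x f ^ Fintype.card K :=
  (comp_aeval_apply (f := x) (FiniteField.frobeniusAlgHom K T) f).symm

end MvPolynomial

theorem FiniteField.exists_algebraMap_eq_of_pow_card_eq {K L : Type*} [Field K] [Fintype K]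
    [Field L] [Algebra K L] {x : L} (hx : x ^ Fintype.card K = x) :
    ∃ a : K, algebraMap K L a = x := by
  have hq := Fintype.one_lt_card (α := K)
  have hroots := Polynomial.roots_map_of_injective_of_card_eq_natDegree
    (algebraMap K L).injective (p := Polynomial.X ^ Fintype.card K - Polynomial.X) (by
      rw [roots_X_pow_card_sub_X, X_pow_card_sub_X_natDegree_eq K hq]; rfl)
  have hmem : x ∈ ((Polynomial.X ^ Fintype.card K - Polynomial.X : Polynomial K).map
      (algebraMap K L)).roots := by
    rw [Polynomial.mem_roots_map_of_injective (algebraMap K L).injective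
      (X_pow_card_sub_X_ne_zero K hq)]
    simp [hx]
  rw [← hroots, roots_X_pow_card_sub_X] at hmem
  simpa using hmem

namespace Projectivization

variable {F K ι : Type*} [Field F] [Field K] [Algebra F K]

variable (K) in
def baseChange : ℙ F (ι → F) → ℙ K (ι → K) :=
  map (σ := algebraMap F K)
    { toFun := fun v i => algebraMap F K (v i)
      map_add' := fun _ _ => funext fun _ => map_add _ _ _
      map_smul' := fun _ _ => funext fun _ => map_mul _ _ _ }
    fun _ _ h => funext fun i => (algebraMap F K).injective (congrFun h i)

theorem baseChange_mk (v : ι → F) (hv : v ≠ 0) :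
    baseChange K (mk F v hv) = mk K (fun i => algebraMap F K (v i))
      (fun h => hv (funext fun i => (algebraMap F K).injective (by simpa using congrFun h i))) :=
  rfl

theorem baseChange_injective :
    Function.Injective (baseChange K : ℙ F (ι → F) → ℙ K (ι → K)) := by
  intro P Q h
  induction P using ind with | h v hv =>
  induction Q using ind with | h w hw =>
  rw [baseChange_mk, baseChange_mk, mk_eq_mk_iff'] at h
  obtain ⟨c, hc⟩ := h
  obtain ⟨j, hj⟩ : ∃ j, w j ≠ 0 := Function.ne_iff.mp hw
  have hcj : c = algebraMap F K (v j / w j) := by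
    rw [map_div₀, ← congrFun hc j, Pi.smul_apply, smul_eq_mul, mul_div_cancel_right₀]
    simpa using hj
  refine (mk_eq_mk_iff' F _ _ _ _).mpr ⟨v j / w j, funext fun i => ?_⟩
  apply (algebraMap F K).injective
  simpa [hcj] using congrFun hc i

end Projectivization

section Frobenius

variable [Fintype F] {K : Type*} [Field K] [Algebra F K]

variable (F) in
theorem exists_aeval_frobPt_rep (P : ProjPlane K) :
    ∃ u : K, u ≠ 0 ∧ ∀ {g : MvPolynomial (Fin 3) F} {m : ℕ}, g.IsHomogeneous m →
      aeval (FrobPt (Fintype.card F) P).rep g = u ^ m * aeval P.rep g ^ Fintype.card F := by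
  unfold FrobPt
  generalize_proofs hv
  obtain ⟨u, hu⟩ := Projectivization.exists_smul_eq_mk_rep K _ hv
  refine ⟨u, u.ne_zero, fun hg => ?_⟩
  rw [← hu, Units.smul_def, hg.aeval_smul_s7, aeval_pow_card]

open Projectivization in
theorem exists_baseChange_eq_of_frobPt_eq {P : ProjPlane K}
    (h : FrobPt (Fintype.card F) P = P) : ∃ Q : ℙ F (Fin 3 → F), baseChange K Q = P := by
  obtain ⟨j, hj⟩ : ∃ j, P.rep j ≠ 0 := Function.ne_iff.mp P.rep_nonzero
  obtain ⟨c, hc⟩ := (mk_eq_mk_iff' K _ _ _ P.rep_nonzero).mp (h.trans P.mk_rep.symm)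
  have hcP : ∀ i, P.rep i ^ Fintype.card F = c * P.rep i := fun i => (congrFun hc i).symm
  have hc0 : c ≠ 0 := by
    rintro rfl
    simpa [hj] using hcP j
  have hfix : ∀ i, (P.rep i / P.rep j) ^ Fintype.card F = P.rep i / P.rep j := fun i => by
    rw [div_pow, hcP, hcP, mul_div_mul_left _ _ hc0]
  choose v hv using fun i => FiniteField.exists_algebraMap_eq_of_pow_card_eq (hfix i)
  have hv0 : v ≠ 0 := Function.ne_iff.mpr ⟨j, fun h0 => by simpa [h0, hj] using hv j⟩
  refine ⟨mk F v hv0, ?_⟩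
  rw [baseChange_mk, ← P.mk_rep, mk_eq_mk_iff']
  refine ⟨(P.rep j)⁻¹, funext fun i => ?_⟩
  simp [hv, div_eq_inv_mul]

end Frobenius

section Tangency

variable {a : Fin 3 → F} {f : MvPolynomial (Fin 3) F} {d : ℕ}
  {P : ProjPlane (AlgebraicClosure F)}

open Projectivization in
theorem mem_ratPoints_of_onCurve_baseChange (hfd : f.IsHomogeneous d) {Q : ℙ F (Fin 3 → F)}
    (h : OnCurve f (baseChange (AlgebraicClosure F) Q)) : Q ∈ RatPoints f := by
  rw [← Q.mk_rep, baseChange_mk] at h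
  generalize_proofs hv at h
  obtain ⟨u, hu⟩ := exists_smul_eq_mk_rep (AlgebraicClosure F) _ hv
  have hQ : aeval (fun i => algebraMap F (AlgebraicClosure F) (Q.rep i)) f =
      algebraMap F (AlgebraicClosure F) (eval Q.rep f) := by
    simpa using (comp_aeval_apply (f := Q.rep) (Algebra.ofId F (AlgebraicClosure F)) f).symm
  rw [OnCurve, ← hu, Units.smul_def, hfd.aeval_smul_s7, hQ] at h
  simpa [RatPoints] using h

theorem IsTangentAt.onLine (hfd : f.IsHomogeneous d) (h : IsTangentAt f a P) : OnLine a P := by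
  obtain ⟨hP, c, -, ha⟩ := h
  simp_rw [OnLine, ha, mul_assoc, ← Finset.mul_sum, hfd.sum_aeval_pderiv_mul]
  rw [show aeval P.rep f = 0 from hP, mul_zero, mul_zero]

theorem OnLine.sum_mul_pow_card_eq_zero [Fintype F] (h : OnLine a P) :
    ∑ i, algebraMap F (AlgebraicClosure F) (a i) * P.rep i ^ Fintype.card F = 0 := by
  simpa [mul_pow, ← map_pow, FiniteField.pow_card] using
    congrArg (FiniteField.frobeniusAlgHom F (AlgebraicClosure F)) h

theorem IsTangentAt.sum_pderiv_mul_pow_card_eq_zero [Fintype F] (hfd : f.IsHomogeneous d)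
    (h : IsTangentAt f a P) :
    ∑ i, aeval P.rep (pderiv i f) * P.rep i ^ Fintype.card F = 0 := by
  have hline := h.onLine hfd
  obtain ⟨-, c, hc, ha⟩ := h
  have hgrad : ∀ i, aeval P.rep (pderiv i f) = c⁻¹ * algebraMap F _ (a i) := fun i => by
    rw [ha, inv_mul_cancel_left₀ hc]
  simp_rw [hgrad, mul_assoc, ← Finset.mul_sum, hline.sum_mul_pow_card_eq_zero, mul_zero]

theorem IsTangentAt.frobPt [Fintype F] (hfd : f.IsHomogeneous d) (h : IsTangentAt f a P) :
    IsTangentAt f a (FrobPt (Fintype.card F) P) := by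
  obtain ⟨hP, c, hc, ha⟩ := h
  obtain ⟨u, hu, haeval⟩ := exists_aeval_frobPt_rep F P
  -- apply Frobenius to `a = c • ∇f(P)`; the gradient is homogeneous of degree `d - 1`
  refine ⟨?_, c ^ Fintype.card F / u ^ (d - 1), by simp [hc, hu], fun i => ?_⟩
  · rw [OnCurve, haeval hfd, show aeval P.rep f = 0 from hP, zero_pow Fintype.card_ne_zero,
      mul_zero]
  · rw [haeval (hfd.pderiv (i := i)), ← FiniteField.pow_card (a i), map_pow, ha, mul_pow]
    field_simp

open Projectivization in
theorem IsTangentAt.unique {L L' : ℙ F (Fin 3 → F)} (h : IsTangentAt f L.rep P)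
    (h' : IsTangentAt f L'.rep P) : L = L' := by
  obtain ⟨-, c, -, hL⟩ := h
  obtain ⟨-, c', hc', hL'⟩ := h'
  rw [← L.mk_rep, ← L'.mk_rep]
  apply baseChange_injective (K := AlgebraicClosure F)
  rw [baseChange_mk, baseChange_mk, mk_eq_mk_iff']
  refine ⟨c / c', funext fun i => ?_⟩
  simp only [Pi.smul_apply, smul_eq_mul, hL, hL']
  field_simp

end Tangency

theorem two_mul_natCard_le_of_two_witnesses {α β : Type*} [Finite β] {r : α → β → Prop}
    (hr : ∀ {a a' b}, r a b → r a' b → a = a') {x y : α → β} (hx : ∀ a, r a (x a))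
    (hy : ∀ a, r a (y a)) (hxy : ∀ a, x a ≠ y a) : 2 * Nat.card α ≤ Nat.card β := by
  have : Finite α := Finite.of_injective x fun a a' h => hr (hx a) (h ▸ hx a')
  have hinj : Function.Injective (Sum.elim x y) := by
    rintro (a | a) (a' | a') h <;>
      simp only [Sum.elim_inl, Sum.elim_inr, Sum.inl.injEq, Sum.inr.injEq, reduceCtorEq] at h ⊢
    · exact hr (hx a) (h ▸ hx a')
    · obtain rfl := hr (hx a) (h ▸ hy a')
      exact hxy a h
    · obtain rfl := hr (hy a) (h ▸ hx a')
      exact hxy a h.symm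
    · exact hr (hy a) (h ▸ hy a')
  simpa [Nat.card_sum, two_mul] using Nat.card_le_card_of_injective _ hinj

theorem card_projPlane [Fintype F] :
    Nat.card (ℙ F (Fin 3 → F)) = Fintype.card F ^ 2 + Fintype.card F + 1 := by
  rw [Projectivization.card_of_finrank F _ (Module.finrank_fin_fun F), Nat.card_eq_fintype_card]
  simp only [Finset.sum_range_succ, Finset.sum_range_zero]
  ring

theorem all_lines_tangent_inequality_general
    (q : ℕ)
    (F : Type*) [Field F] [Fintype F] (hcard : Fintype.card F = q)
    (d : ℕ) (f : MvPolynomial (Fin 3) F) (hfd : f.IsHomogeneous d)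
    (N : ℕ)
    (hNfin : {P : ProjPlane (AlgebraicClosure F) | OnCurve f P ∧
        ∑ i, aeval P.rep (pderiv i f) * P.rep i ^ q = 0}.Finite)
    (hN : {P : ProjPlane (AlgebraicClosure F) | OnCurve f P ∧
        ∑ i, aeval P.rep (pderiv i f) * P.rep i ^ q = 0}.ncard = N)
    (htan : ∀ a : Fin 3 → F, a ≠ 0 → ∃ P : ProjPlane (AlgebraicClosure F), IsTangentAt f a P) :
    2 * (q ^ 2 + q + 1) ≤ 2 * (RatPoints f).ncard + N := by
  subst hcard
  choose Pt hPt using fun L : ℙ F (Fin 3 → F) => htan L.rep L.rep_nonzero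
  set R := {L | FrobPt (Fintype.card F) (Pt L) = Pt L}
  have hR : R.ncard ≤ (RatPoints f).ncard := by
    choose Q hQ using fun L : R => exists_baseChange_eq_of_frobPt_eq L.2
    rw [← Nat.card_coe_set_eq, ← Nat.card_coe_set_eq]
    refine Nat.card_le_card_of_injective (fun L => ⟨Q L,
      mem_ratPoints_of_onCurve_baseChange hfd ((hQ L).symm ▸ (hPt L).1)⟩) fun L L' h => ?_
    have hPt_eq : Pt L = Pt L' := by rw [← hQ, ← hQ, Subtype.mk.inj h]
    exact Subtype.ext ((hPt L).unique (hPt_eq ▸ hPt L'))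
  have hRc : 2 * Rᶜ.ncard ≤ N := by
    have := hNfin.to_subtype
    rw [← hN, ← Nat.card_coe_set_eq, ← Nat.card_coe_set_eq]
    exact two_mul_natCard_le_of_two_witnesses (r := fun L P => IsTangentAt f L.1.rep P.1)
      (x := fun L => ⟨Pt L, (hPt L).1, (hPt L).sum_pderiv_mul_pow_card_eq_zero hfd⟩)
      (y := fun L => ⟨_, ((hPt L).frobPt hfd).1,
        ((hPt L).frobPt hfd).sum_pderiv_mul_pow_card_eq_zero hfd⟩)
      (fun h h' => Subtype.ext (h.unique h')) (fun L => hPt L) (fun L => (hPt L).frobPt hfd)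
      (fun L h => L.2 (congrArg Subtype.val h).symm)
  have hlines := Set.ncard_add_ncard_compl R
  rw [card_projPlane] at hlines
  omega

/-- The key inequality in the proof of Theorem 1: if `C` is a smooth plane curve over
`F_q`, the set `{P ∈ C : Φ(P) ∈ T_P(C)}` is finite of cardinality `N`, and every
`F_q`-line is tangent to `C` at some geometric point, then
`2(q² + q + 1) ≤ 2·#C(F_q) + N`. -/
theorem all_lines_tangent_inequality
    (p q : ℕ) [Fact p.Prime] (hp : 2 < p)
    (F : Type*) [Field F] [Fintype F] [CharP F p] (hcard : Fintype.card F = q)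
    (d : ℕ) (f : MvPolynomial (Fin 3) F) (hf0 : f ≠ 0) (hfd : f.IsHomogeneous d)
    (hsmooth : SmoothCurve f)
    (N : ℕ)
    (hNfin : {P : ProjPlane (AlgebraicClosure F) | OnCurve f P ∧
        ∑ i, aeval P.rep (pderiv i f) * P.rep i ^ q = 0}.Finite)
    (hN : {P : ProjPlane (AlgebraicClosure F) | OnCurve f P ∧
        ∑ i, aeval P.rep (pderiv i f) * P.rep i ^ q = 0}.ncard = N)
    (htan : ∀ a : Fin 3 → F, a ≠ 0 → ∃ P : ProjPlane (AlgebraicClosure F), IsTangentAt f a P) :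
    2 * (q ^ 2 + q + 1) ≤ 2 * (RatPoints f).ncard + N :=
  all_lines_tangent_inequality_general q F hcard d f hfd N hNfin hN htan
end
end

section
/- Let C be a plane curve of degree d over F_q with 1 ≤ d ≤ q and #C(F_q) = d(q - d + 2). Then there exists an F_q-line L such that the number of F_q-rational points of L ∩ C is strictly greater than d(1 - d/(q+1)), i.e., #(L ∩ C)(F_q) > d(q + 1 - d)/(q + 1). -/
open MvPolynomial

noncomputable section

variable {F : Type*} [Field F]

/-- If a plane curve of degree `1 ≤ d ≤ q` over `F_q` has exactly `d(q - d + 2)` rational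
points (as any smooth Frobenius non-classical curve does, by Hefez–Voloch), then some
`F_q`-line contains strictly more than `d(q + 1 - d)/(q + 1)` rational points of `C`. -/
theorem line_with_many_points
    (q d : ℕ) (F : Type*) [Field F] [Fintype F] (hcard : Fintype.card F = q)
    (f : MvPolynomial (Fin 3) F) (hf0 : f ≠ 0) (hfd : f.IsHomogeneous d)
    (hd1 : 1 ≤ d) (hdq : d ≤ q)
    (hpts : (RatPoints f).ncard = d * (q - d + 2)) :
    ∃ a : Fin 3 → F, a ≠ 0 ∧
      (d : ℚ) * ((q : ℚ) + 1 - (d : ℚ)) / ((q : ℚ) + 1) <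
        ({P : Projectivization F (Fin 3 → F) |
          eval P.rep f = 0 ∧ ∑ i, a i * P.rep i = 0}.ncard : ℚ) := by
  classical
  have hq2 : 2 ≤ q := hcard ▸ Fintype.one_lt_card
  haveI : Finite (Projectivization F (Fin 3 → F)) :=
    Finite.of_surjective (fun v : {v : Fin 3 → F // v ≠ 0} => Projectivization.mk F v.1 v.2)
      (fun P => ⟨⟨P.rep, P.rep_nonzero⟩, P.mk_rep⟩)
  haveI : Fintype (Projectivization F (Fin 3 → F)) := Fintype.ofFinite _
  -- kernel counting lemma
  have hker : ∀ v : Fin 3 → F, v ≠ 0 →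
      (Finset.univ.filter (fun a : Fin 3 → F => ∑ i, a i * v i = 0)).card = q ^ 2 := by
    intro v hv
    set φ : Module.Dual F (Fin 3 → F) :=
      { toFun := fun a => ∑ i, a i * v i
        map_add' := by intro a b; simp [add_mul, Finset.sum_add_distrib]
        map_smul' := by intro c a; simp [Finset.mul_sum, mul_assoc] } with hφ
    have hφne : φ ≠ 0 := by
      obtain ⟨j, hj⟩ := Function.ne_iff.mp hv
      intro h
      have h1 : φ (Pi.single j 1) = 0 := by rw [h]; rfl
      rw [hφ] at h1
      simp only [LinearMap.coe_mk, AddHom.coe_mk] at h1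
      rw [Finset.sum_eq_single j (fun i _ hij => by simp [Pi.single_eq_of_ne hij])
        (by simp)] at h1
      simp at h1
      exact hj h1
    have hrk : Module.finrank F (LinearMap.ker φ) + 1 = Module.finrank F (Fin 3 → F) :=
      Module.Dual.finrank_ker_add_one_of_ne_zero hφne
    rw [Module.finrank_fin_fun] at hrk
    have hrk2 : Module.finrank F (LinearMap.ker φ) = 2 := by omega
    have hc : Fintype.card (LinearMap.ker φ) = q ^ 2 := by
      rw [Module.card_eq_pow_finrank (K := F), hrk2, hcard]
    calc (Finset.univ.filter (fun a : Fin 3 → F => ∑ i, a i * v i = 0)).card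
        = Fintype.card {a : Fin 3 → F // ∑ i, a i * v i = 0} := (Fintype.card_subtype _).symm
      _ = Fintype.card (LinearMap.ker φ) := Fintype.card_congr
          (Equiv.subtypeEquivRight (fun a => by simp [LinearMap.mem_ker, hφ]))
      _ = q ^ 2 := hc
  -- the finset of rational points of the curve
  set S : Finset (Projectivization F (Fin 3 → F)) :=
    Finset.univ.filter (fun P => eval P.rep f = 0) with hS
  have hScard : S.card = d * (q - d + 2) := by
    rw [← hpts]
    have : RatPoints f = ↑S := by ext P; simp [RatPoints, hS]
    rw [this, Set.ncard_coe_finset]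
  -- the finset of nonzero coefficient vectors
  set A : Finset (Fin 3 → F) := Finset.univ.filter (fun a => a ≠ 0) with hA
  have hAcard : A.card = q ^ 3 - 1 := by
    rw [hA, Finset.filter_ne', Finset.card_erase_of_mem (Finset.mem_univ _),
      Finset.card_univ, Fintype.card_fun, Fintype.card_fin, hcard]
  -- number of points of the curve on the line a
  set n : (Fin 3 → F) → ℕ :=
    fun a => (S.filter (fun P => ∑ i, a i * P.rep i = 0)).card with hn
  -- double counting
  have hDC : ∑ a ∈ A, n a = S.card * (q ^ 2 - 1) := by
    have h1 : ∀ a, n a = ∑ P ∈ S, if ∑ i, a i * P.rep i = 0 then 1 else 0 := by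
      intro a; rw [hn]; exact Finset.card_filter _ _
    simp only [h1]
    rw [Finset.sum_comm]
    have h2 : ∀ P ∈ S, (∑ a ∈ A, if ∑ i, a i * P.rep i = 0 then 1 else 0) = q ^ 2 - 1 := by
      intro P _
      rw [← Finset.card_filter]
      have : A.filter (fun a => ∑ i, a i * P.rep i = 0) =
          (Finset.univ.filter (fun a : Fin 3 → F => ∑ i, a i * P.rep i = 0)).erase 0 := by
        ext a
        simp [hA, Finset.mem_erase, and_comm, Finset.filter_filter]
      rw [this, Finset.card_erase_of_mem (by simp), hker P.rep P.rep_nonzero]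
    rw [Finset.sum_congr rfl h2, Finset.sum_const, smul_eq_mul]
  -- pigeonhole
  by_contra hcon
  push_neg at hcon
  have hbd : ∀ a ∈ A, (n a : ℚ) ≤ (d : ℚ) * ((q : ℚ) + 1 - (d : ℚ)) / ((q : ℚ) + 1) := by
    intro a ha
    have ha0 : a ≠ 0 := by simpa [hA] using ha
    have := hcon a ha0
    have heq : {P : Projectivization F (Fin 3 → F) |
        eval P.rep f = 0 ∧ ∑ i, a i * P.rep i = 0}.ncard = n a := by
      have : {P : Projectivization F (Fin 3 → F) |
          eval P.rep f = 0 ∧ ∑ i, a i * P.rep i = 0} =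
          ↑(S.filter (fun P => ∑ i, a i * P.rep i = 0)) := by
        ext P; simp [hS, Finset.filter_filter]
      rw [this, Set.ncard_coe_finset]
    rw [heq] at this
    exact this
  have hsum : ((S.card * (q ^ 2 - 1) : ℕ) : ℚ) ≤
      (A.card : ℚ) * ((d : ℚ) * ((q : ℚ) + 1 - (d : ℚ)) / ((q : ℚ) + 1)) := by
    rw [← hDC]
    push_cast
    calc (∑ a ∈ A, (n a : ℚ)) ≤ ∑ a ∈ A, (d : ℚ) * ((q : ℚ) + 1 - (d : ℚ)) / ((q : ℚ) + 1) :=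
          Finset.sum_le_sum hbd
      _ = (A.card : ℚ) * _ := by rw [Finset.sum_const, nsmul_eq_mul]
  -- arithmetic contradiction
  have hq1 : (1 : ℚ) ≤ (q : ℚ) - 1 := by
    have : (2 : ℚ) ≤ (q : ℚ) := by exact_mod_cast hq2
    linarith
  have hdQ : (1 : ℚ) ≤ (d : ℚ) := by exact_mod_cast hd1
  have hdq' : (d : ℚ) ≤ (q : ℚ) := by exact_mod_cast hdq
  have hScardQ : (S.card : ℚ) = (d : ℚ) * ((q : ℚ) - (d : ℚ) + 2) := by
    rw [hScard]; push_cast [Nat.cast_sub hdq]; ring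
  have hAcardQ : (A.card : ℚ) = (q : ℚ) ^ 3 - 1 := by
    rw [hAcard]
    have : 1 ≤ q ^ 3 := Nat.one_le_pow _ _ (by omega)
    push_cast [Nat.cast_sub this]; ring
  have hq2Q : ((q ^ 2 - 1 : ℕ) : ℚ) = (q : ℚ) ^ 2 - 1 := by
    have : 1 ≤ q ^ 2 := Nat.one_le_pow _ _ (by omega)
    push_cast [Nat.cast_sub this]; ring
  rw [Nat.cast_mul, hq2Q, hScardQ, hAcardQ] at hsum
  rw [mul_div_assoc'] at hsum
  rw [le_div_iff₀ (by positivity)] at hsum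
  nlinarith [mul_nonneg (sub_nonneg.mpr hdq') (by linarith : (0:ℚ) ≤ (q:ℚ) - 1), mul_nonneg (mul_nonneg (sub_nonneg.mpr hdq') (by linarith : (0:ℚ) ≤ (q:ℚ) - 1)) (by linarith : (0:ℚ) ≤ (d:ℚ)), sq_nonneg ((q:ℚ) - (d:ℚ)), mul_pos (by linarith : (0:ℚ) < (q:ℚ) - 1) (by linarith : (0:ℚ) < (d:ℚ))]


end
end

section
/- Let q be a power of a prime p > 2 and let C be the plane curve over F_{q^2} defined by x^{q+1} + y^{q+1} + z^{q+1} = 0. Then C is smooth, and C is Frobenius non-classical with respect to F_{q^2}: for every point P of C over the algebraic closure, Φ(P) ∈ T_P(C), where Φ is the q^2-power Frobenius map on the projective plane. -/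
open MvPolynomial

noncomputable section

variable {F : Type*} [Field F]

/-- The Hermitian curve `x^(q+1) + y^(q+1) + z^(q+1) = 0` over `F_{q²}` is smooth and
Frobenius non-classical for `F_{q²}`: the `q²`-power Frobenius image of every geometric
point of the curve lies on the tangent line at that point. -/
theorem hermitian_curve_smooth_and_frobenius_nonclassical
    (p s q : ℕ) [Fact p.Prime] (hp : 2 < p) (hs : 1 ≤ s) (hq : q = p ^ s)
    (F : Type*) [Field F] [Fintype F] [CharP F p] (hcard : Fintype.card F = q ^ 2) :
    SmoothCurve (X 0 ^ (q + 1) + X 1 ^ (q + 1) + X 2 ^ (q + 1) : MvPolynomial (Fin 3) F) ∧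
    FrobeniusNonClassical
      (X 0 ^ (q + 1) + X 1 ^ (q + 1) + X 2 ^ (q + 1) : MvPolynomial (Fin 3) F) (q ^ 2) := by
  subst hq
  classical
  set f : MvPolynomial (Fin 3) F :=
    X 0 ^ (p ^ s + 1) + X 1 ^ (p ^ s + 1) + X 2 ^ (p ^ s + 1) with hf
  set K := AlgebraicClosure F with hK
  haveI : CharP K p := charP_of_injective_algebraMap (algebraMap F K).injective p
  have hq0 : ((p ^ s : ℕ) : K) = 0 := by
    rw [Nat.cast_pow, CharP.cast_eq_zero K p, zero_pow (by omega)]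
  -- gradient computation
  have hgrad : ∀ (v : Fin 3 → K) (i : Fin 3), aeval v (pderiv i f) = v i ^ (p ^ s) := by
    intro v i
    have h1 : pderiv i f = ((p ^ s + 1 : ℕ) : MvPolynomial (Fin 3) F) *
        (X i ^ (p ^ s)) := by
      simp only [hf, map_add, pderiv_pow, pderiv_X, Nat.add_sub_cancel]
      fin_cases i <;>
        simp [Pi.single_apply, Fin.ext_iff]
    rw [h1]
    simp [Nat.cast_add, Nat.cast_pow, CharP.cast_eq_zero K p,
      zero_pow (show s ≠ 0 by omega)]
  have haev : ∀ (v : Fin 3 → K), aeval v f =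
      v 0 ^ (p ^ s + 1) + v 1 ^ (p ^ s + 1) + v 2 ^ (p ^ s + 1) := by
    intro v; simp [hf]
  constructor
  · intro P _
    have hrep := P.rep_nonzero
    have : ∃ i, P.rep i ≠ 0 := by
      by_contra h
      push_neg at h
      exact hrep (funext fun i => h i)
    obtain ⟨i, hi⟩ := this
    exact ⟨i, by rw [hgrad]; exact pow_ne_zero _ hi⟩
  · intro P hP
    have h0 : aeval P.rep f = 0 := hP
    rw [haev] at h0
    have : ∑ i, aeval P.rep (pderiv i f) * P.rep i ^ (p ^ s) ^ 2 =
        (∑ i : Fin 3, P.rep i ^ (p ^ s + 1)) ^ (p ^ s) := by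
      rw [sum_pow_char_pow]
      refine Finset.sum_congr rfl fun i _ => ?_
      rw [hgrad, ← pow_mul, ← pow_add]
      ring_nf
    rw [this, Fin.sum_univ_three, h0, zero_pow]
    positivity


end
end

section
/- Let q be a power of a prime p > 2 and let C be the plane curve over F_{q^2} defined by x^{q+1} + y^{q+1} + z^{q+1} = 0. Then there exists an F_{q^2}-line L that intersects C transversely, i.e., L ∩ C consists of q + 1 distinct points over the algebraic closure of F_{q^2}. -/
open MvPolynomial

noncomputable section

variable {F : Type*} [Field F]

/-! The line `z = 0` is transverse. On it the curve reads `x^(q+1) + y^(q+1) = 0`, which forces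
`y ≠ 0`, so the intersection points are the `[t : 1 : 0]` with `t^(q+1) = -1`. Since `q + 1 ≡ 1`
modulo `p`, the polynomial `X^(q+1) + 1` is separable and there are exactly `q + 1` such `t`. -/

theorem ncard_setOf_pow_eq {K : Type*} [Field K] [IsAlgClosed K] {n : ℕ} (hn : (n : K) ≠ 0)
    {a : K} (ha : a ≠ 0) : {t : K | t ^ n = a}.ncard = n := by
  have hn0 : n ≠ 0 := by rintro rfl; simp at hn
  have hroots : {t : K | t ^ n = a} = (Polynomial.X ^ n - Polynomial.C a).rootSet K := by
    ext t
    simp [Polynomial.mem_rootSet, Polynomial.X_pow_sub_C_ne_zero (Nat.pos_of_ne_zero hn0),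
      sub_eq_zero]
  rw [hroots, Set.ncard_eq_toFinset_card', Set.toFinset_card,
    Polynomial.card_rootSet_eq_natDegree (Polynomial.separable_X_pow_sub_C a hn ha)
      (IsAlgClosed.splits _),
    Polynomial.natDegree_X_pow_sub_C]

def fermatPoly (F : Type*) [Field F] (n : ℕ) : MvPolynomial (Fin 3) F :=
  X 0 ^ n + X 1 ^ n + X 2 ^ n

theorem onCurve_fermatPoly_mk_iff (n : ℕ) {v : Fin 3 → AlgebraicClosure F} (hv : v ≠ 0) :
    OnCurve (fermatPoly F n) (Projectivization.mk (AlgebraicClosure F) v hv) ↔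
      v 0 ^ n + v 1 ^ n + v 2 ^ n = 0 := by
  obtain ⟨c, hc⟩ := Projectivization.exists_smul_eq_mk_rep (AlgebraicClosure F) v hv
  have hcn : (c : AlgebraicClosure F) ^ n ≠ 0 := pow_ne_zero _ c.ne_zero
  simp only [OnCurve, fermatPoly, ← hc, map_add, map_pow, aeval_X, Units.smul_def, Pi.smul_apply,
    smul_eq_mul, mul_pow, ← mul_add, mul_eq_zero, hcn, false_or]

theorem onLine_mk_iff (a : Fin 3 → F) {v : Fin 3 → AlgebraicClosure F} (hv : v ≠ 0) :
    OnLine a (Projectivization.mk (AlgebraicClosure F) v hv) ↔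
      ∑ i, algebraMap F _ (a i) * v i = 0 := by
  obtain ⟨c, hc⟩ := Projectivization.exists_smul_eq_mk_rep (AlgebraicClosure F) v hv
  simp only [OnLine, ← hc, Units.smul_def, Pi.smul_apply, smul_eq_mul,
    mul_left_comm _ (c : AlgebraicClosure F), ← Finset.mul_sum, mul_eq_zero, c.ne_zero, false_or]

def pointAtInfinity {K : Type*} [Field K] (t : K) : ProjPlane K :=
  Projectivization.mk K ![t, 1, 0] fun h => one_ne_zero (congrFun h 1)

theorem pointAtInfinity_injective {K : Type*} [Field K] :
    Function.Injective (pointAtInfinity (K := K)) := by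
  intro s t hst
  obtain ⟨c, hc⟩ := (Projectivization.mk_eq_mk_iff' K _ _ _ _).mp hst
  have hc1 : c = 1 := by simpa using congrFun hc 1
  simpa [hc1] using (congrFun hc 0).symm

theorem mk_eq_pointAtInfinity {K : Type*} [Field K] {v : Fin 3 → K} (hv : v ≠ 0)
    (h1 : v 1 ≠ 0) (h2 : v 2 = 0) : Projectivization.mk K v hv = pointAtInfinity (v 0 / v 1) := by
  rw [pointAtInfinity, Projectivization.mk_eq_mk_iff']
  refine ⟨v 1, funext fun i => ?_⟩
  fin_cases i <;> simp [h1, h2, mul_div_cancel₀]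

theorem fermatPoly_inter_lineAtInfinity_eq_image {n : ℕ} (hn : n ≠ 0) :
    {P : ProjPlane (AlgebraicClosure F) | OnCurve (fermatPoly F n) P ∧ OnLine ![0, 0, 1] P} =
      pointAtInfinity '' {t | t ^ n = -1} := by
  ext P
  constructor
  · rintro ⟨hcurve, hline⟩
    induction P using Projectivization.ind with | h v hv => ?_
    rw [onCurve_fermatPoly_mk_iff] at hcurve
    have h2 : v 2 = 0 := by simpa [onLine_mk_iff, Fin.sum_univ_three] using hline
    rw [h2, zero_pow hn, add_zero] at hcurve
    have h1 : v 1 ≠ 0 := by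
      intro h1
      rw [h1, zero_pow hn, add_zero, pow_eq_zero_iff hn] at hcurve
      exact hv (funext fun i => by fin_cases i <;> simp [hcurve, h1, h2])
    refine ⟨v 0 / v 1, ?_, (mk_eq_pointAtInfinity hv h1 h2).symm⟩
    rw [Set.mem_ofPred_eq, div_pow, div_eq_iff (pow_ne_zero n h1)]
    linear_combination hcurve
  · rintro ⟨t, ht, rfl⟩
    rw [Set.mem_ofPred_eq] at ht
    simp [pointAtInfinity, onCurve_fermatPoly_mk_iff, onLine_mk_iff, Fin.sum_univ_three, ht,
      zero_pow hn]

theorem transverse_fermatPoly_lineAtInfinity {n : ℕ} (hn : (n : F) ≠ 0) :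
    Transverse (fermatPoly F n) ![0, 0, 1] n := by
  have hn' : (n : AlgebraicClosure F) ≠ 0 := by
    simpa using (algebraMap F (AlgebraicClosure F)).injective.ne hn
  rw [Transverse, fermatPoly_inter_lineAtInfinity_eq_image (by rintro rfl; simp at hn),
    Set.ncard_image_of_injective _ pointAtInfinity_injective,
    ncard_setOf_pow_eq hn' (neg_ne_zero.mpr one_ne_zero)]

theorem hermitian_curve_has_transverse_line_general
    (p s q : ℕ) (hs : 1 ≤ s) (hq : q = p ^ s)
    (F : Type*) [Field F] [CharP F p] :
    ∃ a : Fin 3 → F, a ≠ 0 ∧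
      Transverse (X 0 ^ (q + 1) + X 1 ^ (q + 1) + X 2 ^ (q + 1) : MvPolynomial (Fin 3) F)
        a (q + 1) := by
  have hq0 : (q : F) = 0 := by rw [hq, Nat.cast_pow, CharP.cast_eq_zero, zero_pow (by omega)]
  refine ⟨![0, 0, 1], fun h => one_ne_zero (congrFun h 2),
    transverse_fermatPoly_lineAtInfinity ?_⟩
  simp [hq0]

/-- The Hermitian curve `x^(q+1) + y^(q+1) + z^(q+1) = 0` over `F_{q²}` admits an
`F_{q²}`-line meeting it transversely in `q + 1` distinct geometric points. -/
theorem hermitian_curve_has_transverse_line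
    (p s q : ℕ) [Fact p.Prime] (hp : 2 < p) (hs : 1 ≤ s) (hq : q = p ^ s)
    (F : Type*) [Field F] [Fintype F] [CharP F p] (hcard : Fintype.card F = q ^ 2) :
    ∃ a : Fin 3 → F, a ≠ 0 ∧
      Transverse (X 0 ^ (q + 1) + X 1 ^ (q + 1) + X 2 ^ (q + 1) : MvPolynomial (Fin 3) F)
        a (q + 1) :=
  hermitian_curve_has_transverse_line_general p s q hs hq F
end
end
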